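/- Suppose n = p + 1 or n = 2p for some odd prime p. Then the maximum cardinality of a family 𝓖 of simple graphs on the vertex set Fin n such that for any two distinct members G, G' ∈ 𝓖 the symmetric difference G ⊕ G' contains a Hamiltonian cycle equals 2^(n−2); that is, there exists such a family of cardinality 2^(n−2), and every such family has cardinality at most 2^(n−2). -/

import Mathlib

open SimpleGraph Filter

/-- The symmetric difference of two simple graphs on the same vertex set:
two vertices are adjacent iff they are adjacent in exactly one of the graphs. -/
def symmDiffG {V : Type*} (G G' : SimpleGraph V) : SimpleGraph V where
  Adj u v := (G.Adj u v ∧ ¬ G'.Adj u v) ∨ (G'.Adj u v ∧ ¬ G.Adj u v)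
  symm := by
    constructor
    intro u v h
    rcases h with ⟨h1, h2⟩ | ⟨h1, h2⟩
    · exact Or.inl ⟨h1.symm, fun h => h2 h.symm⟩
    · exact Or.inr ⟨h1.symm, fun h => h2 h.symm⟩
  loopless := by
    constructor
    intro u h
    rcases h with ⟨h1, _⟩ | ⟨h1, _⟩
    · exact G.irrefl h1
    · exact G'.irrefl h1


/-- A graph contains a Hamiltonian cycle if it has a cycle visiting every vertex
exactly once. -/
def ContainsHamCycle {V : Type*} [DecidableEq V] (G : SimpleGraph V) : Prop :=
  ∃ (v : V) (p : G.Walk v v), p.IsHamiltonianCycle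

section General
variable {V : Type*} [DecidableEq V]

lemma ham_mono {G G' : SimpleGraph V} (h : G ≤ G') :
    ContainsHamCycle G → ContainsHamCycle G' := by
  rintro ⟨v, p, hp⟩
  exact ⟨v, p.map (SimpleGraph.Hom.ofLE h),
    hp.map Function.bijective_id⟩

lemma first_edge_mem {G : SimpleGraph V} {a b : V} (w : G.Walk a b) (hw : ¬ w.Nil) :
    s(a, w.getVert 1) ∈ w.edges := by
  cases w with
  | nil => simp at hw
  | cons h' w' =>
    rw [show (1:ℕ) = 0 + 1 from rfl, SimpleGraph.Walk.getVert_cons_succ, SimpleGraph.Walk.getVert_zero]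
    simp [SimpleGraph.Walk.edges_cons]

lemma two_nbrs {G : SimpleGraph V} {u : V} {q : G.Walk u u} (hq : q.IsCycle) :
    ∃ b c, b ≠ c ∧ G.Adj u b ∧ G.Adj u c := by
  cases q with
  | nil => exact absurd rfl hq.ne_nil
  | cons h r =>
    rename_i b
    rw [SimpleGraph.Walk.cons_isCycle_iff] at hq
    obtain ⟨hpath, hedge⟩ := hq
    have hbu : b ≠ u := fun hbu => G.loopless.irrefl u (hbu ▸ h)
    have hrnil : ¬ r.reverse.Nil := by
      have h1 : ¬ r.Nil := SimpleGraph.Walk.not_nil_of_ne hbu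
      rw [SimpleGraph.Walk.not_nil_iff_lt_length] at h1 ⊢
      rwa [SimpleGraph.Walk.length_reverse]
    refine ⟨b, r.reverse.getVert 1, ?_, h, r.reverse.adj_snd hrnil⟩
    intro hbc
    apply hedge
    have hmem := first_edge_mem r.reverse hrnil
    rw [SimpleGraph.Walk.edges_reverse, List.mem_reverse] at hmem
    rw [← hbc] at hmem
    exact hmem

lemma hamCycle_rotate {G : SimpleGraph V} {v u : V} {p : G.Walk v v}
    (hp : p.IsHamiltonianCycle) (hu : u ∈ p.support) :
    (p.rotate u hu).IsHamiltonianCycle := by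
  rw [SimpleGraph.Walk.isHamiltonianCycle_iff_isCycle_and_support_count_tail_eq_one] at *
  refine ⟨hp.1.rotate hu, fun a => ?_⟩
  rw [((SimpleGraph.Walk.support_rotate p u hu).perm).count_eq]
  exact hp.2 a

def buildWalk {V : Type*} (G : SimpleGraph V) (f : ℕ → V) (m : ℕ)
    (hadj : ∀ i < m, G.Adj (f i) (f (i + 1))) :
    (j : ℕ) → j ≤ m → G.Walk (f (m - j)) (f m)
  | 0, _ => SimpleGraph.Walk.nil.copy (congrArg f (Nat.sub_zero m).symm) rfl
  | j + 1, h =>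
      SimpleGraph.Walk.cons
        (by
          have e : m - (j + 1) + 1 = m - j := by omega
          have h2 := hadj (m - (j + 1)) (by omega)
          rwa [e] at h2)
        (buildWalk G f m hadj j (by omega))

lemma buildWalk_support {G : SimpleGraph V} {f : ℕ → V} {m : ℕ}
    {hadj : ∀ i < m, G.Adj (f i) (f (i + 1))} :
    ∀ (j : ℕ) (h : j ≤ m),
      (buildWalk G f m hadj j h).support = (List.range' (m - j) (j + 1)).map f := by
  intro j
  induction j with
  | zero => intro h; simp [buildWalk]
  | succ j ih =>
    intro h
    have e : m - (j + 1) + 1 = m - j := by omega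
    have hr : List.range' (m - (j + 1)) (j + 1 + 1) = (m - (j + 1)) :: List.range' (m - j) (j + 1) := by
      rw [List.range'_succ, e]
    rw [buildWalk, SimpleGraph.Walk.support_cons, ih (by omega), hr, List.map_cons]

lemma buildWalk_edges {G : SimpleGraph V} {f : ℕ → V} {m : ℕ}
    {hadj : ∀ i < m, G.Adj (f i) (f (i + 1))} :
    ∀ (j : ℕ) (h : j ≤ m),
      (buildWalk G f m hadj j h).edges
        = (List.range' (m - j) j).map (fun i => s(f i, f (i + 1))) := by
  intro j
  induction j with
  | zero => intro h; simp [buildWalk]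
  | succ j ih =>
    intro h
    have e : m - (j + 1) + 1 = m - j := by omega
    have hr : List.range' (m - (j + 1)) (j + 1) = (m - (j + 1)) :: List.range' (m - j) j := by
      rw [List.range'_succ, e]
    rw [buildWalk, SimpleGraph.Walk.edges_cons, ih (by omega), hr, List.map_cons, e]

lemma hamOfSeq [Fintype V] (G : SimpleGraph V) (m : ℕ) (hm : 3 ≤ m)
    (hcard : Fintype.card V = m) (f : ℕ → V)
    (hinj : ∀ i < m, ∀ j < m, f i = f j → i = j)
    (hcyc : f m = f 0) (hadj : ∀ i < m, G.Adj (f i) (f (i + 1))) :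
    ContainsHamCycle G := by
  have hm1 : m - (m - 1) = 1 := by omega
  -- the path from f 1 to f 0
  set P0 : G.Walk (f (m - (m - 1))) (f m) := buildWalk G f m hadj (m - 1) (by omega) with hP0
  set P : G.Walk (f 1) (f 0) := P0.copy (congrArg f hm1) hcyc with hP
  have hsupP : P.support = (List.range' 1 m).map f := by
    have e2 : m - 1 + 1 = m := by omega
    rw [hP, SimpleGraph.Walk.support_copy, hP0, buildWalk_support, hm1, e2]
  have hedgP : P.edges = (List.range' 1 (m - 1)).map (fun i => s(f i, f (i + 1))) := by
    rw [hP, SimpleGraph.Walk.edges_copy, hP0, buildWalk_edges, hm1]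
  have hadj01 : G.Adj (f 0) (f 1) := hadj 0 (by omega)
  set C : G.Walk (f 0) (f 0) := SimpleGraph.Walk.cons hadj01 P with hC
  -- injectivity facts
  have hinj' : ∀ i ∈ List.range' 1 m, ∀ j ∈ List.range' 1 m, f i = f j → i = j := by
    intro i hi j hj hij
    rw [List.mem_range'_1] at hi hj
    rcases Nat.lt_or_ge i m with hi' | hi'
    · rcases Nat.lt_or_ge j m with hj' | hj'
      · exact hinj i hi' j hj' hij
      · have hj'' : j = m := by omega
        subst hj''
        rw [hcyc] at hij
        have := hinj i hi' 0 (by omega) hij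
        omega
    · have hi'' : i = m := by omega
      rcases Nat.lt_or_ge j m with hj' | hj'
      · have hij' : f 0 = f j := by rw [← hcyc, ← hi'']; exact hij
        have := hinj 0 (by omega) j hj' hij'
        omega
      · omega
  have hnodup : P.support.Nodup := by
    rw [hsupP]
    exact (List.nodup_range' (s := 1) (n := m)).map_on (fun i hi j hj => hinj' i hi j hj)
  have hPath : P.IsPath := SimpleGraph.Walk.IsPath.mk' hnodup
  have hnotmem : s(f 0, f 1) ∉ P.edges := by
    rw [hedgP]
    intro hmem
    obtain ⟨i, hi, hieq⟩ := List.mem_map.mp hmem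
    rw [List.mem_range'_1] at hi
    rw [Sym2.eq_iff] at hieq
    obtain ⟨hi1, hi2⟩ := hi
    rcases hieq with ⟨h1, h2⟩ | ⟨h1, h2⟩
    · have := hinj i (by omega) 0 (by omega) h1
      omega
    · rcases Nat.lt_or_ge (i + 1) m with him | him
      · have := hinj (i + 1) him 0 (by omega) h2
        omega
      · have := hinj i (by omega) 1 (by omega) h1
        omega
  have hCyc : C.IsCycle := by
    rw [hC, SimpleGraph.Walk.cons_isCycle_iff]
    exact ⟨hPath, hnotmem⟩
  -- hamiltonicity
  have hsurj : ∀ v : V, ∃ i, i ∈ List.range' 1 m ∧ f i = v := by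
    intro v
    have hbij : Function.Bijective (fun i : Fin m => f i.val) := by
      rw [Fintype.bijective_iff_injective_and_card]
      constructor
      · intro i j hij
        exact Fin.ext (hinj i.val i.isLt j.val j.isLt hij)
      · simp [hcard]
    obtain ⟨i, hi⟩ := hbij.2 v
    have hi' : f i.val = v := hi
    rcases Nat.eq_zero_or_pos i.val with h0 | h0
    · refine ⟨m, ?_, ?_⟩
      · rw [List.mem_range'_1]; omega
      · rw [hcyc, ← h0]; exact hi'
    · exact ⟨i.val, by rw [List.mem_range'_1]; exact ⟨h0, by have := i.isLt; omega⟩, hi'⟩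
  refine ⟨f 0, C, ?_⟩
  rw [SimpleGraph.Walk.isHamiltonianCycle_iff_isCycle_and_support_count_tail_eq_one]
  refine ⟨hCyc, fun a => ?_⟩
  have htail : C.support.tail = P.support := by
    rw [hC, SimpleGraph.Walk.support_cons]
    rfl
  rw [htail]
  obtain ⟨i, hi, hieq⟩ := hsurj a
  have hmem : a ∈ P.support := by
    rw [hsupP]
    exact List.mem_map.mpr ⟨i, hi, hieq⟩
  exact List.count_eq_one_of_mem hnodup hmem

end General


section P2
variable {V : Type*} [DecidableEq V] {ι : Type*} [DecidableEq ι]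

def bigUnion (M : ι → SimpleGraph V) (S : Finset ι) : SimpleGraph V where
  Adj u v := ∃ i ∈ S, (M i).Adj u v
  symm := by constructor; rintro u v ⟨i, hi, h⟩; exact ⟨i, hi, h.symm⟩
  loopless := by constructor; rintro u ⟨i, hi, h⟩; exact (M i).loopless.irrefl u h

variable {M : ι → SimpleGraph V}

lemma le_bigUnion {S : Finset ι} {i : ι} (hi : i ∈ S) : M i ≤ bigUnion M S :=
  fun _ _ h => ⟨i, hi, h⟩

lemma bigUnion_symmDiff
    (hdisj : ∀ i j u v, (M i).Adj u v → (M j).Adj u v → i = j) (S T : Finset ι) :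
    symmDiffG (bigUnion M S) (bigUnion M T) = bigUnion M (symmDiff S T) := by
  ext u v
  show (_ ∧ ¬ _) ∨ (_ ∧ ¬ _) ↔ _
  constructor
  · rintro (⟨⟨i, hi, h⟩, hn⟩ | ⟨⟨i, hi, h⟩, hn⟩)
    · exact ⟨i, Finset.mem_symmDiff.mpr (Or.inl ⟨hi, fun hT => hn ⟨i, hT, h⟩⟩), h⟩
    · exact ⟨i, Finset.mem_symmDiff.mpr (Or.inr ⟨hi, fun hS => hn ⟨i, hS, h⟩⟩), h⟩
  · rintro ⟨i, hi, h⟩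
    rcases Finset.mem_symmDiff.mp hi with ⟨hiS, hiT⟩ | ⟨hiT, hiS⟩
    · exact Or.inl ⟨⟨i, hiS, h⟩, fun ⟨j, hj, h'⟩ => hiT (hdisj i j u v h h' ▸ hj)⟩
    · exact Or.inr ⟨⟨i, hiT, h⟩, fun ⟨j, hj, h'⟩ => hiS (hdisj i j u v h h' ▸ hj)⟩

lemma bigUnion_inj
    (hdisj : ∀ i j u v, (M i).Adj u v → (M j).Adj u v → i = j)
    (hne : ∀ i, ∃ u v, (M i).Adj u v) {S T : Finset ι}
    (h : bigUnion M S = bigUnion M T) : S = T := by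
  have key : ∀ S T : Finset ι, bigUnion M S = bigUnion M T → ∀ i ∈ S, i ∈ T := by
    intro S T h i hi
    obtain ⟨u, v, huv⟩ := hne i
    have h1 : (bigUnion M S).Adj u v := ⟨i, hi, huv⟩
    rw [h] at h1
    obtain ⟨j, hj, h'⟩ := h1
    rwa [hdisj i j u v huv h']
  exact Finset.Subset.antisymm (key S T h) (key T S h.symm)

lemma even_card_symmDiff {S T : Finset ι} (hS : Even S.card) (hT : Even T.card) :
    Even (symmDiff S T).card := by
  have h1 : (S ∪ T).card + (S ∩ T).card = S.card + T.card := Finset.card_union_add_card_inter S T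
  have h2 : symmDiff S T = (S ∪ T) \ (S ∩ T) := symmDiff_eq_sup_sdiff_inf S T
  have h3 : (symmDiff S T).card = (S ∪ T).card - (S ∩ T).card := by
    rw [h2]
    exact Finset.card_sdiff_of_subset (Finset.inter_subset_union)
  rw [Nat.even_iff] at hS hT ⊢
  have h4 : (S ∩ T).card ≤ (S ∪ T).card := Finset.card_le_card Finset.inter_subset_union
  omega

lemma family_exists {n : ℕ} (hn3 : 3 ≤ n) [Fintype ι]
    (hι : Fintype.card ι = n - 1) (M : ι → SimpleGraph (Fin n))
    (hne : ∀ i, ∃ u v, (M i).Adj u v)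
    (hdisj : ∀ i j u v, (M i).Adj u v → (M j).Adj u v → i = j)
    (hham : ∀ i j, i ≠ j → ContainsHamCycle (M i ⊔ M j)) :
    ∃ 𝓖 : Finset (SimpleGraph (Fin n)),
      (∀ G ∈ 𝓖, ∀ G' ∈ 𝓖, G ≠ G' → ContainsHamCycle (symmDiffG G G')) ∧
      𝓖.card = 2 ^ (n - 2) := by
  classical
  have hne' : Nonempty ι := Fintype.card_pos_iff.mp (by omega)
  obtain ⟨i₀⟩ := hne'
  set base : Finset ι := Finset.univ.erase i₀ with hbase
  set c : Finset ι → Finset ι := fun T => if Even T.card then T else insert i₀ T with hcdef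
  have hcmem : ∀ T ∈ base.powerset, Even ((c T).card) ∧ (c T).erase i₀ = T := by
    intro T hT
    rw [Finset.mem_powerset] at hT
    have hi₀T : i₀ ∉ T := fun h => (Finset.mem_erase.mp (hT h)).1 rfl
    by_cases hev : Even T.card
    · refine ⟨by simp [hcdef, hev], ?_⟩
      simp only [hcdef, if_pos hev]
      exact Finset.erase_eq_of_notMem hi₀T
    · refine ⟨?_, ?_⟩
      · simp only [hcdef, if_neg hev]
        rw [Finset.card_insert_of_notMem hi₀T]
        rw [Nat.even_add_one]
        exact hev
      · simp only [hcdef, if_neg hev]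
        exact Finset.erase_insert hi₀T
  refine ⟨base.powerset.image (fun T => bigUnion M (c T)), ?_, ?_⟩
  · rintro G hG G' hG' hGG'
    obtain ⟨T, hT, rfl⟩ := Finset.mem_image.mp hG
    obtain ⟨T', hT', rfl⟩ := Finset.mem_image.mp hG'
    rw [bigUnion_symmDiff hdisj]
    have hcT : c T ≠ c T' := fun h => hGG' (by rw [h])
    have hΔne : symmDiff (c T) (c T') ≠ ∅ := by
      intro h
      exact hcT (symmDiff_eq_bot.mp h)
    have hΔeven : Even ((symmDiff (c T) (c T')).card) := even_card_symmDiff (hcmem T hT).1 (hcmem T' hT').1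
    have hΔcard : 1 < (symmDiff (c T) (c T')).card := by
      have h1 : 0 < (symmDiff (c T) (c T')).card := Finset.card_pos.mpr (Finset.nonempty_of_ne_empty hΔne)
      rw [Nat.even_iff] at hΔeven
      omega
    obtain ⟨a, ha, b, hb, hab⟩ := Finset.one_lt_card.mp hΔcard
    have hle : M a ⊔ M b ≤ bigUnion M (symmDiff (c T) (c T')) :=
      sup_le (le_bigUnion ha) (le_bigUnion hb)
    exact ham_mono hle (hham a b hab)
  · rw [Finset.card_image_of_injOn, Finset.card_powerset]
    · have : base.card = n - 2 := by
        rw [hbase, Finset.card_erase_of_mem (Finset.mem_univ i₀), Finset.card_univ, hι]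
        omega
      rw [this]
    · intro T hT T' hT' h
      have := bigUnion_inj hdisj hne h
      rw [← (hcmem T hT).2, ← (hcmem T' hT').2, this]

end P2
section Upper

lemma card_graphs_le (n : ℕ) :
    Fintype.card (SimpleGraph (Fin n)) ≤ 2 ^ (n.choose 2) := by
  classical
  have hinj : Function.Injective
      (fun (G : SimpleGraph (Fin n)) => fun (e : {z : Sym2 (Fin n) // ¬ z.IsDiag}) =>
        (e.1 ∈ G.edgeSet : Prop)) := by
    intro G G' h
    apply SimpleGraph.edgeSet_injective
    ext e
    by_cases hd : e.IsDiag
    · constructor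
      · intro hmem; exact absurd hd (G.not_isDiag_of_mem_edgeSet hmem)
      · intro hmem; exact absurd hd (G'.not_isDiag_of_mem_edgeSet hmem)
    · have h2 := congrFun h ⟨e, hd⟩
      simp only at h2
      rw [h2]
  calc Fintype.card (SimpleGraph (Fin n))
      ≤ Fintype.card ({z : Sym2 (Fin n) // ¬ z.IsDiag} → Prop) :=
        Fintype.card_le_of_injective _ hinj
    _ = Fintype.card Prop ^ Fintype.card {z : Sym2 (Fin n) // ¬ z.IsDiag} := Fintype.card_fun
    _ = 2 ^ (n.choose 2) := by rw [Fintype.card_prop, Sym2.card_subtype_not_diag,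
        Fintype.card_fin]

lemma noham_of_deg1 {n : ℕ} [NeZero n] (h01 : (0 : Fin n) ≠ 1) (D : SimpleGraph (Fin n))
    (hD : ∀ u v, D.Adj u v → u = 0 → v = 1) : ¬ ContainsHamCycle D := by
  rintro ⟨v, pp, hp⟩
  have h0 : (0 : Fin n) ∈ pp.support := hp.mem_support 0
  have hq := (hamCycle_rotate hp h0).isCycle
  obtain ⟨b, c, hbc, hub, huc⟩ := two_nbrs hq
  exact hbc ((hD 0 b hub rfl).trans (hD 0 c huc rfl).symm)

lemma fin_zero_ne_one {n : ℕ} [NeZero n] (hn : 4 ≤ n) : (0 : Fin n) ≠ 1 := by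
  intro h
  have h2 := congrArg Fin.val h
  rw [Fin.val_zero, Fin.val_one'] at h2
  rw [Nat.mod_eq_of_lt (by omega)] at h2
  omega

lemma symmDiff_cancel {V : Type*} (G F G' F' : SimpleGraph V)
    (hJ : symmDiffG G F = symmDiffG G' F') : symmDiffG G G' = symmDiffG F F' := by
  ext u v
  have h1 : (symmDiffG G F).Adj u v ↔ (symmDiffG G' F').Adj u v := by rw [hJ]
  show (G.Adj u v ∧ ¬ G'.Adj u v) ∨ (G'.Adj u v ∧ ¬ G.Adj u v) ↔
    (F.Adj u v ∧ ¬ F'.Adj u v) ∨ (F'.Adj u v ∧ ¬ F.Adj u v)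
  have h2 : (G.Adj u v ∧ ¬ F.Adj u v) ∨ (F.Adj u v ∧ ¬ G.Adj u v) ↔
      (G'.Adj u v ∧ ¬ F'.Adj u v) ∨ (F'.Adj u v ∧ ¬ G'.Adj u v) := h1
  tauto

lemma symmDiff_right_cancel {V : Type*} (G F F' : SimpleGraph V)
    (hJ : symmDiffG G F = symmDiffG G F') : F = F' := by
  ext u v
  have h1 : (symmDiffG G F).Adj u v ↔ (symmDiffG G F').Adj u v := by rw [hJ]
  show F.Adj u v ↔ F'.Adj u v
  have h2 : (G.Adj u v ∧ ¬ F.Adj u v) ∨ (F.Adj u v ∧ ¬ G.Adj u v) ↔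
      (G.Adj u v ∧ ¬ F'.Adj u v) ∨ (F'.Adj u v ∧ ¬ G.Adj u v) := h1
  tauto

lemma exists_F (n : ℕ) [NeZero n] (hn : 4 ≤ n) :
    ∃ (𝓕 : Finset (SimpleGraph (Fin n))) (b : ℕ), b + (n - 2) = n.choose 2 ∧
      𝓕.card = 2 ^ b ∧ ∀ F ∈ 𝓕, ∀ u v : Fin n, F.Adj u v → u = 0 → v = 1 := by
  classical
  have h01 : (0 : Fin n) ≠ 1 := by
    intro h
    have h2 := congrArg Fin.val h
    rw [Fin.val_zero, Fin.val_one'] at h2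
    rw [Nat.mod_eq_of_lt (by omega)] at h2
    omega
  set A : Finset (Sym2 (Fin n)) :=
    Finset.univ.filter (fun e => ¬ e.IsDiag ∧ ((0 : Fin n) ∉ e ∨ e = s(0, 1))) with hA
  set notDiag : Finset (Sym2 (Fin n)) := Finset.univ.filter (fun e => ¬ e.IsDiag) with hnd
  set bad : Finset (Sym2 (Fin n)) :=
    Finset.univ.filter (fun e => ¬ e.IsDiag ∧ (0 : Fin n) ∈ e ∧ e ≠ s(0, 1)) with hbad
  have hAeq : A = notDiag \ bad := by
    ext e
    simp only [hA, hnd, hbad, Finset.mem_filter, Finset.mem_sdiff, Finset.mem_univ, true_and]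
    tauto
  have hbadsub : bad ⊆ notDiag := by
    intro e he
    simp only [hnd, hbad, Finset.mem_filter, Finset.mem_univ, true_and] at he ⊢
    exact he.1
  have hndcard : notDiag.card = n.choose 2 := by
    have h1 : Fintype.card {z : Sym2 (Fin n) // ¬ z.IsDiag} = notDiag.card := by
      rw [Fintype.card_subtype]
    rw [← h1, Sym2.card_subtype_not_diag, Fintype.card_fin]
  have hbadcard : bad.card = n - 2 := by
    have himg : bad = (Finset.univ \ {0, 1} : Finset (Fin n)).image (fun x => s((0 : Fin n), x)) := by
      ext e
      simp only [hbad, Finset.mem_filter, Finset.mem_univ, true_and, Finset.mem_image,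
        Finset.mem_sdiff, Finset.mem_insert, Finset.mem_singleton, not_or]
      constructor
      · rintro ⟨hnd', h0, hne⟩
        obtain ⟨y, rfl⟩ := Sym2.mem_iff_exists.mp h0
        refine ⟨y, ⟨?_, ?_⟩, rfl⟩
        · intro hy0; exact hnd' (by rw [hy0]; exact Sym2.mk_isDiag_iff.mpr rfl)
        · intro hy1; exact hne (by rw [hy1])
      · rintro ⟨x, ⟨hx0, hx1⟩, rfl⟩
        refine ⟨?_, Sym2.mem_mk_left _ _, ?_⟩
        · rw [Sym2.mk_isDiag_iff]; exact fun h => hx0 h.symm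
        · intro h
          rcases Sym2.eq_iff.mp h with ⟨-, h2⟩ | ⟨h1, -⟩
          · exact hx1 h2
          · exact h01 h1
    rw [himg, Finset.card_image_of_injOn]
    · rw [Finset.card_sdiff_of_subset (by intro x _; exact Finset.mem_univ x), Finset.card_univ,
        Fintype.card_fin, Finset.card_pair h01]
    · intro x hx y hy hxy
      rcases Sym2.eq_iff.mp hxy with ⟨-, h2⟩ | ⟨h1, h2⟩
      · exact h2
      · exfalso
        rw [Finset.mem_coe, Finset.mem_sdiff, Finset.mem_insert] at hx
        exact hx.2 (Or.inl h2)
  have hAcard : A.card + (n - 2) = n.choose 2 := by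
    rw [hAeq, ← hbadcard, Finset.card_sdiff_add_card_eq_card hbadsub, hndcard]
  -- the fixed family 𝓕
  have hAallowed : ∀ e ∈ A, ¬ e.IsDiag ∧ ((0 : Fin n) ∉ e ∨ e = s(0, 1)) := by
    intro e he
    simpa only [hA, Finset.mem_filter, Finset.mem_univ, true_and] using he
  set 𝓕 : Finset (SimpleGraph (Fin n)) :=
    A.powerset.image (fun s => SimpleGraph.fromEdgeSet ((s : Finset (Sym2 (Fin n))) : Set (Sym2 (Fin n)))) with h𝓕
  have hedgeSet : ∀ s ∈ A.powerset, (SimpleGraph.fromEdgeSet (↑s : Set (Sym2 (Fin n)))).edgeSet = ↑s := by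
    intro s hs
    rw [Finset.mem_powerset] at hs
    rw [SimpleGraph.edgeSet_fromEdgeSet]
    ext e
    constructor
    · exact fun h => h.1
    · intro h
      exact ⟨h, (hAallowed e (hs h)).1⟩
  have hinj𝓕 : Set.InjOn (fun s =>
      SimpleGraph.fromEdgeSet ((s : Finset (Sym2 (Fin n))) : Set (Sym2 (Fin n)))) ↑A.powerset := by
    intro s hs t ht hst
    rw [Finset.mem_coe] at hs ht
    have h1 := hedgeSet s hs
    have h2 := hedgeSet t ht
    simp only at hst
    rw [hst] at h1
    exact Finset.coe_injective (h1 ▸ h2)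
  have h𝓕card : 𝓕.card = 2 ^ A.card := by
    have h1 : 𝓕.card = A.powerset.card := by
      rw [h𝓕]
      exact Finset.card_image_of_injOn hinj𝓕
    rw [h1, Finset.card_powerset]
  have h𝓕prop : ∀ F ∈ 𝓕, ∀ u v : Fin n, F.Adj u v → u = 0 → v = 1 := by
    intro F hF u v huv hu
    obtain ⟨s, hs, rfl⟩ := Finset.mem_image.mp hF
    rw [Finset.mem_powerset] at hs
    rw [SimpleGraph.fromEdgeSet_adj] at huv
    obtain ⟨hmem, hne⟩ := huv
    have hal := hAallowed _ (hs hmem)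
    rcases hal.2 with h0 | heq
    · exact absurd (hu ▸ Sym2.mem_mk_left u v) h0
    · rcases Sym2.eq_iff.mp heq with ⟨-, h2⟩ | ⟨h1, h2⟩
      · exact h2
      · rw [hu] at h1; exact absurd h1 h01
  exact ⟨𝓕, A.card, hAcard, h𝓕card, h𝓕prop⟩

set_option maxHeartbeats 1000000 in
lemma upper_bound {n : ℕ} (hn : 4 ≤ n) (𝓖 : Finset (SimpleGraph (Fin n)))
    (hprop : ∀ G ∈ 𝓖, ∀ G' ∈ 𝓖, G ≠ G' → ContainsHamCycle (symmDiffG G G')) :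
    𝓖.card ≤ 2 ^ (n - 2) := by
  classical
  haveI : NeZero n := ⟨by omega⟩
  have h01 : (0 : Fin n) ≠ 1 := fin_zero_ne_one hn
  obtain ⟨𝓕, b, hAcard, h𝓕card, h𝓕prop⟩ := exists_F n hn
  have hcount : (𝓖 ×ˢ 𝓕).card ≤ 2 ^ (n.choose 2) := by
    have hinj : Set.InjOn (fun x : SimpleGraph (Fin n) × SimpleGraph (Fin n) =>
        symmDiffG x.1 x.2) ↑(𝓖 ×ˢ 𝓕) := by
      rintro ⟨G, F⟩ hx ⟨G', F'⟩ hy hJ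
      simp only at hJ
      simp only [Finset.coe_product, Set.mem_prod, Finset.mem_coe] at hx hy
      have hcancel := symmDiff_cancel G F G' F' hJ
      have hGG' : G = G' := by
        by_contra hne
        have hham := hprop G hx.1 G' hy.1 hne
        rw [hcancel] at hham
        refine noham_of_deg1 h01 _ ?_ hham
        intro u v huv hu
        rcases huv with ⟨h1, -⟩ | ⟨h1, -⟩
        · exact h𝓕prop F hx.2 u v h1 hu
        · exact h𝓕prop F' hy.2 u v h1 hu
      subst hGG'
      rw [symmDiff_right_cancel G F F' hJ]
    calc (𝓖 ×ˢ 𝓕).card ≤ (Finset.univ : Finset (SimpleGraph (Fin n))).card :=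
          Finset.card_le_card_of_injOn _ (fun a _ => Finset.mem_univ _) hinj
      _ = Fintype.card (SimpleGraph (Fin n)) := Finset.card_univ
      _ ≤ 2 ^ (n.choose 2) := card_graphs_le n
  rw [Finset.card_product, h𝓕card] at hcount
  have hexp : 2 ^ (n.choose 2) = 2 ^ b * 2 ^ (n - 2) := by
    rw [← pow_add, hAcard]
  rw [hexp] at hcount
  have h2pos : 0 < 2 ^ b := Nat.pow_pos (by norm_num)
  calc 𝓖.card = (2 ^ b * 𝓖.card) / 2 ^ b := by
        rw [Nat.mul_div_cancel_left _ h2pos]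
    _ ≤ (2 ^ b * 2 ^ (n - 2)) / 2 ^ b := by
        apply Nat.div_le_div_right
        rw [Nat.mul_comm (2 ^ b) 𝓖.card]
        exact hcount
    _ = 2 ^ (n - 2) := by rw [Nat.mul_div_cancel_left _ h2pos]

end Upper
section CaseA

def gfun (p : ℕ) : ℕ → ZMod p := fun k => if Even k then -(k : ZMod p) else (k : ZMod p) + 1

lemma cast_eq_of_lt {p a b : ℕ} (ha : a < p) (hb : b < p) (h : (a : ZMod p) = (b : ZMod p)) :
    a = b := by
  rw [ZMod.natCast_eq_natCast_iff'] at h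
  rwa [Nat.mod_eq_of_lt ha, Nat.mod_eq_of_lt hb] at h

lemma dvd_of_add_cast_eq_zero {p a b : ℕ} (h : (a : ZMod p) + (b : ZMod p) = 0) :
    p ∣ a + b := by
  rw [← ZMod.natCast_eq_zero_iff]
  push_cast
  exact h

lemma dvd_bound_parity {p a b : ℕ} (hdvd : p ∣ a + b) (hlt : a + b < 2 * p)
    (hpos : 0 < a + b) (hpar : (a + b) % 2 = 0) (hp : p % 2 = 1) : False := by
  obtain ⟨t, ht⟩ := hdvd
  have h0 : t = 0 ∨ t = 1 ∨ 2 ≤ t := by omega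
  rcases h0 with rfl | rfl | h2
  · omega
  · omega
  · have h3 : 2 * p ≤ p * t := by
      calc 2 * p = p * 2 := by ring
        _ ≤ p * t := Nat.mul_le_mul_left p h2
    omega

lemma gfun_inj {p : ℕ} (hodd : Odd p) : ∀ k < p, ∀ l < p, gfun p k = gfun p l → k = l := by
  intro k hk l hl h
  have hp2 : p % 2 = 1 := Nat.odd_iff.mp hodd
  unfold gfun at h
  by_cases hke : Even k <;> by_cases hle : Even l
  · rw [if_pos hke, if_pos hle] at h
    exact cast_eq_of_lt hk hl (neg_injective h)
  · rw [if_pos hke, if_neg hle] at h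
    -- -(k) = l + 1
    have h0 : ((k : ZMod p) + ((l + 1 : ℕ) : ZMod p)) = 0 := by
      push_cast
      linear_combination -h
    have hdvd := dvd_of_add_cast_eq_zero h0
    have hke' : k % 2 = 0 := Nat.even_iff.mp hke
    have hle' : l % 2 = 1 := Nat.odd_iff.mp (Nat.not_even_iff_odd.mp hle)
    exact absurd (dvd_bound_parity hdvd (by omega) (by omega) (by omega) hp2) (by simp)
  · rw [if_neg hke, if_pos hle] at h
    have h0 : ((l : ZMod p) + ((k + 1 : ℕ) : ZMod p)) = 0 := by
      push_cast
      linear_combination h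
    have hdvd := dvd_of_add_cast_eq_zero h0
    have hke' : k % 2 = 1 := Nat.odd_iff.mp (Nat.not_even_iff_odd.mp hke)
    have hle' : l % 2 = 0 := Nat.even_iff.mp hle
    exact absurd (dvd_bound_parity hdvd (by omega) (by omega) (by omega) hp2) (by simp)
  · rw [if_neg hke, if_neg hle] at h
    have h' : (k : ZMod p) = (l : ZMod p) := by linear_combination h
    exact cast_eq_of_lt hk hl h'

lemma gfun_zero (p : ℕ) : gfun p 0 = 0 := by simp [gfun]

lemma gfun_sum_even {p : ℕ} {k : ℕ} (hk : Even k) :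
    gfun p k + gfun p (k + 1) = 2 := by
  have hk1 : ¬ Even (k + 1) := by simp [Nat.even_add_one, hk]
  unfold gfun
  rw [if_pos hk, if_neg hk1]
  push_cast
  ring

lemma gfun_sum_odd {p : ℕ} {k : ℕ} (hk : ¬ Even k) :
    gfun p k + gfun p (k + 1) = 0 := by
  have hk1 : Even (k + 1) := by simp [Nat.even_add_one, hk]
  unfold gfun
  rw [if_neg hk, if_pos hk1]
  push_cast
  ring

lemma cast_pred_eq_neg_one {p : ℕ} (hp : 1 ≤ p) : ((p - 1 : ℕ) : ZMod p) = -1 := by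
  have h : ((p - 1 : ℕ) : ZMod p) + 1 = 0 := by
    have : ((p - 1 : ℕ) : ZMod p) + ((1 : ℕ) : ZMod p) = (((p - 1) + 1 : ℕ) : ZMod p) := by
      push_cast; ring
    rw [show ((1:ℕ) : ZMod p) = 1 by push_cast; ring] at this
    rw [this, show (p - 1) + 1 = p by omega, ZMod.natCast_self]
  linear_combination h

lemma gfun_pred {p : ℕ} (hodd : Odd p) (hp : 1 ≤ p) : gfun p (p - 1) = 1 := by
  have he : Even (p - 1) := by
    have := Nat.odd_iff.mp hodd
    rw [Nat.even_iff]
    omega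
  unfold gfun
  rw [if_pos he, cast_pred_eq_neg_one hp]
  ring

-- the vertex embedding for Case A
def embA (p : ℕ) [NeZero p] (z : ZMod p) : Fin (p + 1) :=
  ⟨z.val, by have := ZMod.val_lt z; omega⟩

def inftyA (p : ℕ) : Fin (p + 1) := ⟨p, Nat.lt_succ_self p⟩

lemma embA_inj {p : ℕ} [NeZero p] {z w : ZMod p} (h : embA p z = embA p w) : z = w := by
  have := congrArg Fin.val h
  exact ZMod.val_injective p this

lemma embA_ne_infty {p : ℕ} [NeZero p] (z : ZMod p) : embA p z ≠ inftyA p := by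
  intro h
  have := congrArg Fin.val h
  have h2 := ZMod.val_lt z
  simp only [embA, inftyA] at this
  omega

def MA (p : ℕ) [NeZero p] (i : ZMod p) : SimpleGraph (Fin (p + 1)) where
  Adj u v := (∃ x y : ZMod p, u = embA p x ∧ v = embA p y ∧ x ≠ y ∧ x + y = 2 * i)
    ∨ (u = inftyA p ∧ v = embA p i) ∨ (v = inftyA p ∧ u = embA p i)
  symm := by
    constructor
    rintro u v (⟨x, y, hx, hy, hxy, hs⟩ | ⟨h1, h2⟩ | ⟨h1, h2⟩)
    · exact Or.inl ⟨y, x, hy, hx, fun h => hxy h.symm, by rw [add_comm]; exact hs⟩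
    · exact Or.inr (Or.inr ⟨h1, h2⟩)
    · exact Or.inr (Or.inl ⟨h1, h2⟩)
  loopless := by
    constructor
    rintro u (⟨x, y, hx, hy, hxy, hs⟩ | ⟨h1, h2⟩ | ⟨h1, h2⟩)
    · exact hxy (embA_inj (hx.symm.trans hy))
    · exact embA_ne_infty _ (h2.symm.trans h1)
    · exact embA_ne_infty _ (h2.symm.trans h1)

lemma twoZ_ne_zero {p : ℕ} (hp : p.Prime) (hodd : Odd p) : (2 : ZMod p) ≠ 0 := by
  have h2 : ((2 : ℕ) : ZMod p) = (2 : ZMod p) := by push_cast; ring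
  rw [← h2, Ne, ZMod.natCast_eq_zero_iff]
  intro hdvd
  have hle := Nat.le_of_dvd (by norm_num) hdvd
  have h2le := hp.two_le
  have := Nat.odd_iff.mp hodd
  omega

lemma MA_disj {p : ℕ} [NeZero p] (hp : p.Prime) (hodd : Odd p) :
    ∀ i j : ZMod p, ∀ u v, (MA p i).Adj u v → (MA p j).Adj u v → i = j := by
  haveI : Fact p.Prime := ⟨hp⟩
  intro i j u v hi hj
  rcases hi with ⟨x, y, hx, hy, hxy, hs⟩ | ⟨h1, h2⟩ | ⟨h1, h2⟩ <;>
    rcases hj with ⟨x', y', hx', hy', hxy', hs'⟩ | ⟨h1', h2'⟩ | ⟨h1', h2'⟩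
  · have hxx : x = x' := embA_inj (hx.symm.trans hx')
    have hyy : y = y' := embA_inj (hy.symm.trans hy')
    have : 2 * i = 2 * j := by rw [← hs, ← hs', hxx, hyy]
    exact mul_left_cancel₀ (twoZ_ne_zero hp hodd) this
  · exact absurd (hx.symm.trans h1') (embA_ne_infty x)
  · exact absurd (hy.symm.trans h1') (embA_ne_infty y)
  · exact absurd (hx'.symm.trans h1) (embA_ne_infty x')
  · exact embA_inj (h2.symm.trans h2')
  · exact absurd (h2.symm.trans h1') (embA_ne_infty i)
  · exact absurd (hy'.symm.trans h1) (embA_ne_infty y')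
  · exact absurd (h2'.symm.trans h1) (embA_ne_infty j)
  · exact embA_inj (h2.symm.trans h2')

lemma MA_ham {p : ℕ} [NeZero p] (hp : p.Prime) (hodd : Odd p) {i j : ZMod p} (hij : i ≠ j) :
    ContainsHamCycle (MA p i ⊔ MA p j) := by
  haveI : Fact p.Prime := ⟨hp⟩
  have hp3 : 3 ≤ p := by
    have h2 := hp.two_le
    have := Nat.odd_iff.mp hodd
    omega
  set d : ZMod p := j - i with hd
  have hdne : d ≠ 0 := sub_ne_zero.mpr (Ne.symm hij)
  set f : ℕ → Fin (p + 1) := fun k =>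
    if k = 0 then inftyA p
    else if k ≤ p then embA p (i + gfun p (k - 1) * d) else inftyA p with hf
  apply hamOfSeq _ (p + 1) (by omega) (by simp) f
  · -- injectivity
    intro k hk l hl hkl
    rcases Nat.eq_zero_or_pos k with hk0 | hk0 <;> rcases Nat.eq_zero_or_pos l with hl0 | hl0
    · omega
    · exfalso
      have hkv : f k = inftyA p := by rw [hf]; simp [hk0]
      have hlv : f l = embA p (i + gfun p (l - 1) * d) := by
        rw [hf]; simp only [if_neg (by omega : ¬ l = 0), if_pos (by omega : l ≤ p)]
      rw [hkv, hlv] at hkl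
      exact absurd hkl.symm (embA_ne_infty _)
    · exfalso
      have hlv : f l = inftyA p := by rw [hf]; simp [hl0]
      have hkv : f k = embA p (i + gfun p (k - 1) * d) := by
        rw [hf]; simp only [if_neg (by omega : ¬ k = 0), if_pos (by omega : k ≤ p)]
      rw [hkv, hlv] at hkl
      exact absurd hkl (embA_ne_infty _)
    · have hkv : f k = embA p (i + gfun p (k - 1) * d) := by
        rw [hf]; simp only [if_neg (by omega : ¬ k = 0), if_pos (by omega : k ≤ p)]
      have hlv : f l = embA p (i + gfun p (l - 1) * d) := by
        rw [hf]; simp only [if_neg (by omega : ¬ l = 0), if_pos (by omega : l ≤ p)]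
      rw [hkv, hlv] at hkl
      have h1 := embA_inj hkl
      have h2 : gfun p (k - 1) * d = gfun p (l - 1) * d := by
        have := add_left_cancel h1
        exact this
      have h3 : gfun p (k - 1) = gfun p (l - 1) := mul_right_cancel₀ hdne h2
      have := gfun_inj hodd (k - 1) (by omega) (l - 1) (by omega) h3
      omega
  · -- cyclic
    rw [hf]
    norm_num
  · -- adjacency
    intro k hk
    rcases Nat.eq_zero_or_pos k with hk0 | hk0
    · -- edge infty -- emb i  (in M i)
      subst hk0
      have h0 : f 0 = inftyA p := by rw [hf]; simp
      have h1 : f 1 = embA p i := by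
        rw [hf]
        simp only [if_neg (by omega : ¬ (1:ℕ) = 0), if_pos (by omega : 1 ≤ p)]
        rw [show (1:ℕ) - 1 = 0 from rfl, gfun_zero, zero_mul, add_zero]
      rw [h0, h1]
      exact Or.inl (Or.inr (Or.inl ⟨rfl, rfl⟩))
    · rcases Nat.lt_or_ge k p with hkp | hkp
      · -- internal edge: emb (i + g (k-1) d) -- emb (i + g k d)
        have hkv : f k = embA p (i + gfun p (k - 1) * d) := by
          rw [hf]; simp only [if_neg (by omega : ¬ k = 0), if_pos (by omega : k ≤ p)]
        have hk1v : f (k + 1) = embA p (i + gfun p k * d) := by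
          rw [hf]
          simp only [if_neg (by omega : ¬ k + 1 = 0), if_pos (by omega : k + 1 ≤ p)]
          rw [show k + 1 - 1 = k from rfl]
        rw [hkv, hk1v]
        have hne : i + gfun p (k - 1) * d ≠ i + gfun p k * d := by
          intro h
          have h2 := mul_right_cancel₀ hdne (add_left_cancel h)
          have := gfun_inj hodd (k - 1) (by omega) k (by omega) h2
          omega
        have hsum : gfun p (k - 1) + gfun p k = if Even (k - 1) then 2 else 0 := by
          by_cases he : Even (k - 1)
          · rw [if_pos he]
            have := gfun_sum_even (p := p) he
            rwa [show k - 1 + 1 = k by omega] at this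
          · rw [if_neg he]
            have := gfun_sum_odd (p := p) he
            rwa [show k - 1 + 1 = k by omega] at this
        by_cases he : Even (k - 1)
        · -- sum = 2j : edge of M j
          rw [if_pos he] at hsum
          refine Or.inr (Or.inl ⟨_, _, rfl, rfl, hne, ?_⟩)
          rw [hd]
          linear_combination (j - i) * hsum
        · rw [if_neg he] at hsum
          refine Or.inl (Or.inl ⟨_, _, rfl, rfl, hne, ?_⟩)
          rw [hd]
          linear_combination (j - i) * hsum
      · -- k = p : edge emb j -- infty (in M j)
        have hkp' : k = p := by omega
        rw [hkp']
        have hkv : f p = embA p j := by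
          rw [hf]
          simp only [if_neg (by omega : ¬ p = 0), if_pos (le_refl p)]
          rw [gfun_pred hodd (by omega), one_mul, hd]
          congr 1
          ring
        have hk1v : f (p + 1) = inftyA p := by
          rw [hf]
          simp only [if_neg (by omega : ¬ p + 1 = 0), if_neg (by omega : ¬ p + 1 ≤ p)]
        rw [hkv, hk1v]
        exact Or.inr (Or.inr (Or.inr ⟨rfl, rfl⟩))

lemma MA_nonempty {p : ℕ} [NeZero p] (i : ZMod p) : ∃ u v, (MA p i).Adj u v :=
  ⟨inftyA p, embA p i, Or.inr (Or.inl ⟨rfl, rfl⟩)⟩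

lemma caseA {p : ℕ} (hp : p.Prime) (hodd : Odd p) :
    ∃ 𝓖 : Finset (SimpleGraph (Fin (p + 1))),
      (∀ G ∈ 𝓖, ∀ G' ∈ 𝓖, G ≠ G' → ContainsHamCycle (symmDiffG G G')) ∧
      𝓖.card = 2 ^ (p + 1 - 2) := by
  haveI : NeZero p := ⟨hp.ne_zero⟩
  have hp3 : 3 ≤ p := by
    have h2 := hp.two_le
    have := Nat.odd_iff.mp hodd
    omega
  exact family_exists (n := p + 1) (by omega)
    (by rw [ZMod.card]; omega)
    (MA p) MA_nonempty
    (fun i j u v hi hj => MA_disj hp hodd i j u v hi hj)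
    (fun i j hij => MA_ham hp hodd hij)

end CaseA
section CaseB

def encB (p : ℕ) [NeZero p] (z : ZMod p) (s : Bool) : Fin (2 * p) :=
  ⟨z.val + cond s p 0, by
    have := ZMod.val_lt z
    cases s <;> simp only [cond] <;> omega⟩

lemma encB_inj {p : ℕ} [NeZero p] {z w : ZMod p} {s t : Bool}
    (h : encB p z s = encB p w t) : z = w ∧ s = t := by
  have hv := congrArg Fin.val h
  simp only [encB] at hv
  have hz := ZMod.val_lt z
  have hw := ZMod.val_lt w
  cases s <;> cases t <;> simp only [cond] at hv
  · exact ⟨ZMod.val_injective p (by omega), rfl⟩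
  · exact absurd hv (by omega)
  · exact absurd hv (by omega)
  · exact ⟨ZMod.val_injective p (by omega), rfl⟩

def FB (p : ℕ) [NeZero p] (i : ZMod p) : SimpleGraph (Fin (2 * p)) where
  Adj u v := (∃ x y : ZMod p, ∃ s : Bool, u = encB p x s ∧ v = encB p y s ∧ x ≠ y ∧ x + y = 2 * i)
    ∨ (u = encB p i false ∧ v = encB p i true) ∨ (v = encB p i false ∧ u = encB p i true)
  symm := by
    constructor
    rintro u v (⟨x, y, s, hx, hy, hxy, hs⟩ | ⟨h1, h2⟩ | ⟨h1, h2⟩)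
    · exact Or.inl ⟨y, x, s, hy, hx, fun h => hxy h.symm, by rw [add_comm]; exact hs⟩
    · exact Or.inr (Or.inr ⟨h1, h2⟩)
    · exact Or.inr (Or.inl ⟨h1, h2⟩)
  loopless := by
    constructor
    rintro u (⟨x, y, s, hx, hy, hxy, hs⟩ | ⟨h1, h2⟩ | ⟨h1, h2⟩)
    · exact hxy (encB_inj (hx.symm.trans hy)).1
    · exact absurd (encB_inj (h1.symm.trans h2)).2 (by simp)
    · exact absurd (encB_inj (h1.symm.trans h2)).2 (by simp)

def GB (p : ℕ) [NeZero p] (c : ZMod p) : SimpleGraph (Fin (2 * p)) where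
  Adj u v := ∃ x : ZMod p,
    (u = encB p x false ∧ v = encB p (x + c) true) ∨ (v = encB p x false ∧ u = encB p (x + c) true)
  symm := by
    constructor
    rintro u v ⟨x, ⟨h1, h2⟩ | ⟨h1, h2⟩⟩
    · exact ⟨x, Or.inr ⟨h1, h2⟩⟩
    · exact ⟨x, Or.inl ⟨h1, h2⟩⟩
  loopless := by
    constructor
    rintro u ⟨x, ⟨h1, h2⟩ | ⟨h1, h2⟩⟩ <;>
      exact absurd (encB_inj (h1.symm.trans h2)).2 (by simp)

lemma FB_FB_disj {p : ℕ} [NeZero p] (hp : p.Prime) (hodd : Odd p) {i j : ZMod p} {u v}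
    (hi : (FB p i).Adj u v) (hj : (FB p j).Adj u v) : i = j := by
  haveI : Fact p.Prime := ⟨hp⟩
  rcases hi with ⟨x, y, s, hx, hy, hxy, hs⟩ | ⟨h1, h2⟩ | ⟨h1, h2⟩ <;>
    rcases hj with ⟨x', y', s', hx', hy', hxy', hs'⟩ | ⟨h1', h2'⟩ | ⟨h1', h2'⟩
  · obtain ⟨hxx, hss⟩ := encB_inj (hx.symm.trans hx')
    obtain ⟨hyy, -⟩ := encB_inj (hy.symm.trans hy')
    have h2 : 2 * i = 2 * j := by rw [← hs, ← hs', hxx, hyy]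
    exact mul_left_cancel₀ (twoZ_ne_zero hp hodd) h2
  · have e1 := (encB_inj (hx.symm.trans h1')).2
    have e2 := (encB_inj (hy.symm.trans h2')).2
    rw [e1] at e2; exact absurd e2 (by simp)
  · have e1 := (encB_inj (hx.symm.trans h2')).2
    have e2 := (encB_inj (hy.symm.trans h1')).2
    rw [e2] at e1; exact absurd e1 (by simp)
  · have e1 := (encB_inj (hx'.symm.trans h1)).2
    have e2 := (encB_inj (hy'.symm.trans h2)).2
    rw [e1] at e2; exact absurd e2 (by simp)
  · exact (encB_inj (h1.symm.trans h1')).1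
  · exact absurd (encB_inj (h1.symm.trans h2')).2 (by simp)
  · have e1 := (encB_inj (hx'.symm.trans h2)).2
    have e2 := (encB_inj (hy'.symm.trans h1)).2
    rw [e2] at e1; exact absurd e1 (by simp)
  · exact absurd (encB_inj (h1'.symm.trans h2)).2 (by simp)
  · exact (encB_inj (h1.symm.trans h1')).1

lemma FB_GB_disj {p : ℕ} [NeZero p] {i c : ZMod p} (hc : c ≠ 0) {u v}
    (hi : (FB p i).Adj u v) (hg : (GB p c).Adj u v) : False := by
  obtain ⟨x, ⟨g1, g2⟩ | ⟨g1, g2⟩⟩ := hg <;>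
    rcases hi with ⟨x', y', s, hx', hy', hxy', hs'⟩ | ⟨h1, h2⟩ | ⟨h1, h2⟩
  · have e1 := (encB_inj (hx'.symm.trans g1)).2
    have e2 := (encB_inj (hy'.symm.trans g2)).2
    rw [e1] at e2; exact absurd e2 (by simp)
  · have e1 := (encB_inj (h1.symm.trans g1)).1
    have e2 := (encB_inj (h2.symm.trans g2)).1
    apply hc
    exact left_eq_add.mp (e1.symm.trans e2)
  · exact absurd (encB_inj (h2.symm.trans g1)).2 (by simp)
  · have e1 := (encB_inj (hy'.symm.trans g1)).2
    have e2 := (encB_inj (hx'.symm.trans g2)).2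
    rw [e1] at e2; exact absurd e2 (by simp)
  · exact absurd (encB_inj (h1.symm.trans g2)).2 (by simp)
  · have e1 := (encB_inj (h1.symm.trans g1)).1
    have e2 := (encB_inj (h2.symm.trans g2)).1
    apply hc
    exact left_eq_add.mp (e1.symm.trans e2)

lemma GB_GB_disj {p : ℕ} [NeZero p] {c c' : ZMod p} {u v}
    (h1 : (GB p c).Adj u v) (h2 : (GB p c').Adj u v) : c = c' := by
  obtain ⟨x, ⟨g1, g2⟩ | ⟨g1, g2⟩⟩ := h1 <;> obtain ⟨x', ⟨g1', g2'⟩ | ⟨g1', g2'⟩⟩ := h2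
  · have e1 := (encB_inj (g1.symm.trans g1')).1
    have e2 := (encB_inj (g2.symm.trans g2')).1
    rw [← e1] at e2
    exact add_left_cancel e2
  · exact absurd (encB_inj (g1.symm.trans g2')).2 (by simp)
  · exact absurd (encB_inj (g1.symm.trans g2')).2 (by simp)
  · have e1 := (encB_inj (g1.symm.trans g1')).1
    have e2 := (encB_inj (g2.symm.trans g2')).1
    rw [← e1] at e2
    exact add_left_cancel e2

end CaseB
section CaseBHam

lemma FB_FB_ham {p : ℕ} [NeZero p] (hp : p.Prime) (hodd : Odd p) {i j : ZMod p} (hij : i ≠ j) :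
    ContainsHamCycle (FB p i ⊔ FB p j) := by
  haveI : Fact p.Prime := ⟨hp⟩
  have hp3 : 3 ≤ p := by
    have h2 := hp.two_le
    have := Nat.odd_iff.mp hodd
    omega
  set d : ZMod p := j - i with hd
  have hdne : d ≠ 0 := sub_ne_zero.mpr (Ne.symm hij)
  set f : ℕ → Fin (2 * p) := fun k =>
    if k < p then encB p (i + gfun p k * d) false
    else if k < 2 * p then encB p (i + gfun p (2 * p - 1 - k) * d) true
    else encB p (i + gfun p 0 * d) false with hf
  apply hamOfSeq _ (2 * p) (by omega) (by simp) f
  · -- injectivity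
    intro k hk l hl hkl
    rcases Nat.lt_or_ge k p with hkp | hkp <;> rcases Nat.lt_or_ge l p with hlp | hlp
    · have hkv : f k = encB p (i + gfun p k * d) false := by rw [hf]; simp only [if_pos hkp]
      have hlv : f l = encB p (i + gfun p l * d) false := by rw [hf]; simp only [if_pos hlp]
      rw [hkv, hlv] at hkl
      have h1 := (encB_inj hkl).1
      have h2 := mul_right_cancel₀ hdne (add_left_cancel h1)
      exact gfun_inj hodd k hkp l hlp h2
    · exfalso
      have hkv : f k = encB p (i + gfun p k * d) false := by rw [hf]; simp only [if_pos hkp]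
      have hlv : f l = encB p (i + gfun p (2 * p - 1 - l) * d) true := by
        rw [hf]; simp only [if_neg (by omega : ¬ l < p), if_pos (by omega : l < 2 * p)]
      rw [hkv, hlv] at hkl
      exact absurd (encB_inj hkl).2 (by simp)
    · exfalso
      have hkv : f k = encB p (i + gfun p (2 * p - 1 - k) * d) true := by
        rw [hf]; simp only [if_neg (by omega : ¬ k < p), if_pos (by omega : k < 2 * p)]
      have hlv : f l = encB p (i + gfun p l * d) false := by rw [hf]; simp only [if_pos hlp]
      rw [hkv, hlv] at hkl
      exact absurd (encB_inj hkl).2 (by simp)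
    · have hkv : f k = encB p (i + gfun p (2 * p - 1 - k) * d) true := by
        rw [hf]; simp only [if_neg (by omega : ¬ k < p), if_pos (by omega : k < 2 * p)]
      have hlv : f l = encB p (i + gfun p (2 * p - 1 - l) * d) true := by
        rw [hf]; simp only [if_neg (by omega : ¬ l < p), if_pos (by omega : l < 2 * p)]
      rw [hkv, hlv] at hkl
      have h1 := (encB_inj hkl).1
      have h2 := mul_right_cancel₀ hdne (add_left_cancel h1)
      have := gfun_inj hodd (2 * p - 1 - k) (by omega) (2 * p - 1 - l) (by omega) h2
      omega
  · -- cyclic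
    rw [hf]
    simp only [if_neg (by omega : ¬ 2 * p < p), if_neg (by omega : ¬ 2 * p < 2 * p),
      if_pos (by omega : 0 < p)]
  · -- adjacency
    intro k hk
    rcases Nat.lt_or_ge (k + 1) p with hk1 | hk1
    · -- internal, side false
      have hkv : f k = encB p (i + gfun p k * d) false := by
        rw [hf]; simp only [if_pos (by omega : k < p)]
      have hk1v : f (k + 1) = encB p (i + gfun p (k + 1) * d) false := by
        rw [hf]; simp only [if_pos hk1]
      rw [hkv, hk1v]
      have hne : i + gfun p k * d ≠ i + gfun p (k + 1) * d := by
        intro h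
        have h2 := mul_right_cancel₀ hdne (add_left_cancel h)
        have := gfun_inj hodd k (by omega) (k + 1) (by omega) h2
        omega
      by_cases he : Even k
      · have hsum := gfun_sum_even (p := p) he
        refine Or.inr (Or.inl ⟨_, _, false, rfl, rfl, hne, ?_⟩)
        rw [hd]; linear_combination (j - i) * hsum
      · have hsum := gfun_sum_odd (p := p) he
        refine Or.inl (Or.inl ⟨_, _, false, rfl, rfl, hne, ?_⟩)
        rw [hd]; linear_combination (j - i) * hsum
    · rcases Nat.lt_or_ge k p with hkp | hkp
      · -- k = p - 1 : cross edge of FB j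
        have hkeq : k = p - 1 := by omega
        have hjv : i + gfun p (p - 1) * d = j := by
          rw [gfun_pred hodd (by omega), one_mul, hd]; ring
        have hkv : f k = encB p j false := by
          rw [hf]; simp only [if_pos hkp]
          rw [hkeq, hjv]
        have hk1v : f (k + 1) = encB p j true := by
          rw [hf]
          simp only [if_neg (by omega : ¬ k + 1 < p), if_pos (by omega : k + 1 < 2 * p)]
          rw [show 2 * p - 1 - (k + 1) = p - 1 by omega, hjv]
        rw [hkv, hk1v]
        exact Or.inr (Or.inr (Or.inl ⟨rfl, rfl⟩))
      · rcases Nat.lt_or_ge (k + 1) (2 * p) with hk2 | hk2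
        · -- internal, side true
          set l : ℕ := 2 * p - 2 - k with hl
          have hkv : f k = encB p (i + gfun p (l + 1) * d) true := by
            rw [hf]; simp only [if_neg (by omega : ¬ k < p), if_pos (by omega : k < 2 * p)]
            rw [show 2 * p - 1 - k = l + 1 by omega]
          have hk1v : f (k + 1) = encB p (i + gfun p l * d) true := by
            rw [hf]; simp only [if_neg (by omega : ¬ k + 1 < p), if_pos hk2]
            rw [show 2 * p - 1 - (k + 1) = l by omega]
          rw [hkv, hk1v]
          have hne : i + gfun p (l + 1) * d ≠ i + gfun p l * d := by
            intro h
            have h2 := mul_right_cancel₀ hdne (add_left_cancel h)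
            have := gfun_inj hodd (l + 1) (by omega) l (by omega) h2
            omega
          by_cases he : Even l
          · have hsum := gfun_sum_even (p := p) he
            refine Or.inr (Or.inl ⟨_, _, true, rfl, rfl, hne, ?_⟩)
            rw [hd]; linear_combination (j - i) * hsum
          · have hsum := gfun_sum_odd (p := p) he
            refine Or.inl (Or.inl ⟨_, _, true, rfl, rfl, hne, ?_⟩)
            rw [hd]; linear_combination (j - i) * hsum
        · -- k = 2p - 1 : cross edge of FB i
          have hiv : i + gfun p 0 * d = i := by rw [gfun_zero]; ring
          have hkv : f k = encB p i true := by
            rw [hf]; simp only [if_neg (by omega : ¬ k < p), if_pos (by omega : k < 2 * p)]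
            rw [show 2 * p - 1 - k = 0 by omega, hiv]
          have hk1v : f (k + 1) = encB p i false := by
            rw [hf]
            simp only [if_neg (by omega : ¬ k + 1 < p), if_neg (by omega : ¬ k + 1 < 2 * p)]
            rw [hiv]
          rw [hkv, hk1v]
          exact Or.inl (Or.inr (Or.inr ⟨rfl, rfl⟩))

end CaseBHam
section FBGB

def aB (p : ℕ) (k : ℕ) : ZMod p :=
  if k % 4 ≤ 1 then (((k + 1) / 2 : ℕ) : ZMod p) else -(((k + 1) / 2 : ℕ) : ZMod p)

def sB (k : ℕ) : Bool := decide (k % 4 = 1 ∨ k % 4 = 2)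

lemma aB_pos {p k : ℕ} (h : k % 4 ≤ 1) : aB p k = (((k + 1) / 2 : ℕ) : ZMod p) := if_pos h

lemma aB_neg {p k : ℕ} (h : ¬ k % 4 ≤ 1) : aB p k = -(((k + 1) / 2 : ℕ) : ZMod p) := if_neg h

lemma sB_false {k : ℕ} (h : k % 4 = 0 ∨ k % 4 = 3) : sB k = false := by
  rw [sB, decide_eq_false_iff_not]
  omega

lemma sB_true {k : ℕ} (h : k % 4 = 1 ∨ k % 4 = 2) : sB k = true := by
  simp only [sB, decide_eq_true_eq]
  omega

lemma natcast_ne_zero {p t : ℕ} (h1 : 0 < t) (h2 : t < p) : ((t : ℕ) : ZMod p) ≠ 0 := by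
  rw [Ne, ZMod.natCast_eq_zero_iff]
  intro h
  have := Nat.le_of_dvd h1 h
  omega

lemma aBsB_inj {p : ℕ} (hodd : Odd p) :
    ∀ k < 2 * p, ∀ l < 2 * p, aB p k = aB p l → sB k = sB l → k = l := by
  intro k hk l hl ha hs
  have hp2 : p % 2 = 1 := Nat.odd_iff.mp hodd
  rcases (show k % 4 = 0 ∨ k % 4 = 1 ∨ k % 4 = 2 ∨ k % 4 = 3 by omega) with hk4 | hk4 | hk4 | hk4 <;>
    rcases (show l % 4 = 0 ∨ l % 4 = 1 ∨ l % 4 = 2 ∨ l % 4 = 3 by omega) with hl4 | hl4 | hl4 | hl4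
  -- (0,0)
  · rw [aB_pos (by omega), aB_pos (by omega)] at ha
    have := cast_eq_of_lt (by omega) (by omega) ha
    omega
  -- (0,1) side mismatch
  · rw [sB_false (by omega), sB_true (by omega)] at hs; exact absurd hs (by simp)
  -- (0,2)
  · rw [sB_false (by omega), sB_true (by omega)] at hs; exact absurd hs (by simp)
  -- (0,3)
  · rw [aB_pos (by omega), aB_neg (by omega)] at ha
    have h0 : (((k + 1) / 2 : ℕ) : ZMod p) + (((l + 1) / 2 : ℕ) : ZMod p) = 0 := by
      linear_combination ha
    exact (dvd_bound_parity (dvd_of_add_cast_eq_zero h0) (by omega) (by omega) (by omega)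
      hp2).elim
  -- (1,0)
  · rw [sB_true (by omega), sB_false (by omega)] at hs; exact absurd hs (by simp)
  -- (1,1)
  · rw [aB_pos (by omega), aB_pos (by omega)] at ha
    rw [ZMod.natCast_eq_natCast_iff'] at ha
    by_cases htk : (k + 1) / 2 < p <;> by_cases htl : (l + 1) / 2 < p
    · rw [Nat.mod_eq_of_lt htk, Nat.mod_eq_of_lt htl] at ha; omega
    · rw [Nat.mod_eq_of_lt htk, show (l + 1) / 2 = p by omega, Nat.mod_self] at ha; omega
    · rw [Nat.mod_eq_of_lt htl, show (k + 1) / 2 = p by omega, Nat.mod_self] at ha; omega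
    · omega
  -- (1,2)
  · rw [aB_pos (by omega), aB_neg (by omega)] at ha
    have h0 : (((k + 1) / 2 : ℕ) : ZMod p) + (((l + 1) / 2 : ℕ) : ZMod p) = 0 := by
      linear_combination ha
    exact (dvd_bound_parity (dvd_of_add_cast_eq_zero h0) (by omega) (by omega) (by omega)
      hp2).elim
  -- (1,3)
  · rw [sB_true (by omega), sB_false (by omega)] at hs; exact absurd hs (by simp)
  -- (2,0)
  · rw [sB_true (by omega), sB_false (by omega)] at hs; exact absurd hs (by simp)
  -- (2,1)
  · rw [aB_neg (by omega), aB_pos (by omega)] at ha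
    have h0 : (((k + 1) / 2 : ℕ) : ZMod p) + (((l + 1) / 2 : ℕ) : ZMod p) = 0 := by
      linear_combination -ha
    exact (dvd_bound_parity (dvd_of_add_cast_eq_zero h0) (by omega) (by omega) (by omega)
      hp2).elim
  -- (2,2)
  · rw [aB_neg (by omega), aB_neg (by omega)] at ha
    have := cast_eq_of_lt (by omega) (by omega) (neg_injective ha)
    omega
  -- (2,3)
  · rw [sB_true (by omega), sB_false (by omega)] at hs; exact absurd hs (by simp)
  -- (3,0)
  · rw [aB_neg (by omega), aB_pos (by omega)] at ha
    have h0 : (((k + 1) / 2 : ℕ) : ZMod p) + (((l + 1) / 2 : ℕ) : ZMod p) = 0 := by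
      linear_combination -ha
    exact (dvd_bound_parity (dvd_of_add_cast_eq_zero h0) (by omega) (by omega) (by omega)
      hp2).elim
  -- (3,1)
  · rw [sB_false (by omega), sB_true (by omega)] at hs; exact absurd hs (by simp)
  -- (3,2)
  · rw [sB_false (by omega), sB_true (by omega)] at hs; exact absurd hs (by simp)
  -- (3,3)
  · rw [aB_neg (by omega), aB_neg (by omega)] at ha
    have := cast_eq_of_lt (by omega) (by omega) (neg_injective ha)
    omega

lemma FB_GB_ham {p : ℕ} [NeZero p] (hp : p.Prime) (hodd : Odd p) {i c : ZMod p}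
    (hc : c ≠ 0) : ContainsHamCycle (FB p i ⊔ GB p c) := by
  haveI : Fact p.Prime := ⟨hp⟩
  have hp2 : p % 2 = 1 := Nat.odd_iff.mp hodd
  have hp3 : 3 ≤ p := by
    have h2 := hp.two_le
    omega
  set f : ℕ → Fin (2 * p) := fun k =>
    if k < 2 * p then encB p (i + aB p k * c) (sB k)
    else encB p (i + aB p 0 * c) (sB 0) with hf
  apply hamOfSeq _ (2 * p) (by omega) (by simp) f
  · -- injectivity
    intro k hk l hl hkl
    have hkv : f k = encB p (i + aB p k * c) (sB k) := by rw [hf]; simp only [if_pos hk]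
    have hlv : f l = encB p (i + aB p l * c) (sB l) := by rw [hf]; simp only [if_pos hl]
    rw [hkv, hlv] at hkl
    obtain ⟨h1, h2⟩ := encB_inj hkl
    have h3 := mul_right_cancel₀ hc (add_left_cancel h1)
    exact aBsB_inj hodd k hk l hl h3 h2
  · -- cyclic
    rw [hf]
    simp only [if_neg (by omega : ¬ 2 * p < 2 * p), if_pos (by omega : 0 < 2 * p)]
  · -- adjacency
    intro k hk
    have hkv : f k = encB p (i + aB p k * c) (sB k) := by rw [hf]; simp only [if_pos hk]
    rcases (show k % 4 = 0 ∨ k % 4 = 1 ∨ k % 4 = 2 ∨ k % 4 = 3 by omega) with hk4 | hk4 | hk4 | hk4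
    · -- GB edge, false → true
      have hlt : k + 1 < 2 * p := by omega
      have hk1v : f (k + 1) = encB p (i + aB p (k + 1) * c) (sB (k + 1)) := by
        rw [hf]; simp only [if_pos hlt]
      rw [hkv, hk1v, sB_false (Or.inl hk4), sB_true (Or.inl (by omega)),
        aB_pos (by omega), aB_pos (by omega)]
      refine Or.inr ⟨i + (((k + 1) / 2 : ℕ) : ZMod p) * c, Or.inl ⟨rfl, ?_⟩⟩
      congr 1
      rw [show (k + 1 + 1) / 2 = (k + 1) / 2 + 1 by omega]
      push_cast
      ring
    · rcases Nat.lt_or_ge (k + 1) (2 * p) with hlt | hge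
      · -- FB i edge within side true
        have hk1v : f (k + 1) = encB p (i + aB p (k + 1) * c) (sB (k + 1)) := by
          rw [hf]; simp only [if_pos hlt]
        rw [hkv, hk1v, sB_true (Or.inl hk4), sB_true (Or.inr (by omega)),
          aB_pos (by omega), aB_neg (by omega)]
        have htb1 : 1 ≤ (k + 1) / 2 := by omega
        have htb2 : (k + 1) / 2 ≤ p - 1 := by omega
        have hne : i + (((k + 1) / 2 : ℕ) : ZMod p) * c
            ≠ i + -(((k + 1 + 1) / 2 : ℕ) : ZMod p) * c := by
          rw [show (k + 1 + 1) / 2 = (k + 1) / 2 by omega]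
          intro h
          have h2 : (2 : ZMod p) * (((k + 1) / 2 : ℕ) : ZMod p) * c = 0 := by
            linear_combination h
          exact (mul_ne_zero (mul_ne_zero (twoZ_ne_zero hp hodd)
            (natcast_ne_zero (by omega) (by omega))) hc) h2
        refine Or.inl (Or.inl ⟨_, _, true, rfl, rfl, hne, ?_⟩)
        rw [show (k + 1 + 1) / 2 = (k + 1) / 2 by omega]
        ring
      · -- k = 2p - 1 : cross edge of FB i
        have hkeq : k = 2 * p - 1 := by omega
        have ht : (k + 1) / 2 = p := by omega
        have hcast : (((k + 1) / 2 : ℕ) : ZMod p) = 0 := by rw [ht, ZMod.natCast_self]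
        have hkv2 : f k = encB p i true := by
          rw [hkv, sB_true (Or.inl hk4), aB_pos (by omega), hcast]
          congr 1
          ring
        have hk1v : f (k + 1) = encB p i false := by
          rw [hf]
          simp only [if_neg (by omega : ¬ k + 1 < 2 * p)]
          have ha0 : aB p 0 = 0 := by
            rw [aB_pos (by norm_num), show (0 + 1) / 2 = 0 by norm_num]
            exact Nat.cast_zero
          have hs0 : sB 0 = false := sB_false (by norm_num)
          rw [ha0, hs0]
          congr 1
          ring
        rw [hkv2, hk1v]
        exact Or.inl (Or.inr (Or.inr ⟨rfl, rfl⟩))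
    · -- GB edge, true → false
      have hlt : k + 1 < 2 * p := by omega
      have hk1v : f (k + 1) = encB p (i + aB p (k + 1) * c) (sB (k + 1)) := by
        rw [hf]; simp only [if_pos hlt]
      rw [hkv, hk1v, sB_true (Or.inr hk4), sB_false (Or.inr (by omega)),
        aB_neg (by omega), aB_neg (by omega)]
      refine Or.inr ⟨i + -(((k + 1 + 1) / 2 : ℕ) : ZMod p) * c, Or.inr ⟨rfl, ?_⟩⟩
      congr 1
      rw [show (k + 1 + 1) / 2 = (k + 1) / 2 + 1 by omega]
      push_cast
      ring
    · -- FB i edge within side false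
      have hlt : k + 1 < 2 * p := by omega
      have hk1v : f (k + 1) = encB p (i + aB p (k + 1) * c) (sB (k + 1)) := by
        rw [hf]; simp only [if_pos hlt]
      rw [hkv, hk1v, sB_false (Or.inr hk4), sB_false (Or.inl (by omega)),
        aB_neg (by omega), aB_pos (by omega)]
      have hne : i + -(((k + 1) / 2 : ℕ) : ZMod p) * c
          ≠ i + (((k + 1 + 1) / 2 : ℕ) : ZMod p) * c := by
        rw [show (k + 1 + 1) / 2 = (k + 1) / 2 by omega]
        intro h
        have h2 : (2 : ZMod p) * (((k + 1) / 2 : ℕ) : ZMod p) * c = 0 := by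
          linear_combination -h
        exact (mul_ne_zero (mul_ne_zero (twoZ_ne_zero hp hodd)
          (natcast_ne_zero (by omega) (by omega))) hc) h2
      refine Or.inl (Or.inl ⟨_, _, false, rfl, rfl, hne, ?_⟩)
      rw [show (k + 1 + 1) / 2 = (k + 1) / 2 by omega]
      ring

end FBGB
section GBGB

lemma GB_GB_ham {p : ℕ} [NeZero p] (hp : p.Prime) (hodd : Odd p) {c c' : ZMod p}
    (hcc' : c ≠ c') : ContainsHamCycle (GB p c ⊔ GB p c') := by
  haveI : Fact p.Prime := ⟨hp⟩
  have hp3 : 3 ≤ p := by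
    have h2 := hp.two_le
    have := Nat.odd_iff.mp hodd
    omega
  set e : ZMod p := c - c' with he
  have hene : e ≠ 0 := sub_ne_zero.mpr hcc'
  set f : ℕ → Fin (2 * p) := fun k =>
    if k < 2 * p then
      (if k % 2 = 0 then encB p (((k / 2 : ℕ) : ZMod p) * e) false
       else encB p (((k / 2 : ℕ) : ZMod p) * e + c) true)
    else encB p (((0 / 2 : ℕ) : ZMod p) * e) false with hf
  apply hamOfSeq _ (2 * p) (by omega) (by simp) f
  · -- injectivity
    intro k hk l hl hkl
    by_cases hke : k % 2 = 0 <;> by_cases hle : l % 2 = 0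
    · have hkv : f k = encB p (((k / 2 : ℕ) : ZMod p) * e) false := by
        rw [hf]; simp only [if_pos hk, if_pos hke]
      have hlv : f l = encB p (((l / 2 : ℕ) : ZMod p) * e) false := by
        rw [hf]; simp only [if_pos hl, if_pos hle]
      rw [hkv, hlv] at hkl
      have h1 := mul_right_cancel₀ hene (encB_inj hkl).1
      have := cast_eq_of_lt (by omega) (by omega) h1
      omega
    · exfalso
      have hkv : f k = encB p (((k / 2 : ℕ) : ZMod p) * e) false := by
        rw [hf]; simp only [if_pos hk, if_pos hke]
      have hlv : f l = encB p (((l / 2 : ℕ) : ZMod p) * e + c) true := by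
        rw [hf]; simp only [if_pos hl, if_neg hle]
      rw [hkv, hlv] at hkl
      exact absurd (encB_inj hkl).2 (by simp)
    · exfalso
      have hkv : f k = encB p (((k / 2 : ℕ) : ZMod p) * e + c) true := by
        rw [hf]; simp only [if_pos hk, if_neg hke]
      have hlv : f l = encB p (((l / 2 : ℕ) : ZMod p) * e) false := by
        rw [hf]; simp only [if_pos hl, if_pos hle]
      rw [hkv, hlv] at hkl
      exact absurd (encB_inj hkl).2 (by simp)
    · have hkv : f k = encB p (((k / 2 : ℕ) : ZMod p) * e + c) true := by
        rw [hf]; simp only [if_pos hk, if_neg hke]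
      have hlv : f l = encB p (((l / 2 : ℕ) : ZMod p) * e + c) true := by
        rw [hf]; simp only [if_pos hl, if_neg hle]
      rw [hkv, hlv] at hkl
      have h0 := (encB_inj hkl).1
      have h1 := mul_right_cancel₀ hene (add_right_cancel h0)
      have := cast_eq_of_lt (by omega) (by omega) h1
      omega
  · -- cyclic
    rw [hf]
    simp only [if_neg (by omega : ¬ 2 * p < 2 * p), if_pos (by omega : 0 < 2 * p)]
    simp
  · -- adjacency
    intro k hk
    by_cases hke : k % 2 = 0
    · -- GB c edge : false → true
      have hlt : k + 1 < 2 * p := by omega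
      have hkv : f k = encB p (((k / 2 : ℕ) : ZMod p) * e) false := by
        rw [hf]; simp only [if_pos hk, if_pos hke]
      have hk1v : f (k + 1) = encB p (((k / 2 : ℕ) : ZMod p) * e + c) true := by
        rw [hf]; simp only [if_pos hlt, if_neg (by omega : ¬ (k + 1) % 2 = 0)]
        rw [show (k + 1) / 2 = k / 2 by omega]
      rw [hkv, hk1v]
      exact Or.inl ⟨((k / 2 : ℕ) : ZMod p) * e, Or.inl ⟨rfl, rfl⟩⟩
    · -- GB c' edge : true → false
      have hkv : f k = encB p (((k / 2 : ℕ) : ZMod p) * e + c) true := by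
        rw [hf]; simp only [if_pos hk, if_neg hke]
      rcases Nat.lt_or_ge (k + 1) (2 * p) with hlt | hge
      · have hk1v : f (k + 1) = encB p ((((k + 1) / 2 : ℕ) : ZMod p) * e) false := by
          rw [hf]; simp only [if_pos hlt, if_pos (by omega : (k + 1) % 2 = 0)]
        rw [hkv, hk1v]
        refine Or.inr ⟨(((k + 1) / 2 : ℕ) : ZMod p) * e, Or.inr ⟨rfl, ?_⟩⟩
        congr 1
        rw [show (k + 1) / 2 = k / 2 + 1 by omega, he]
        push_cast
        ring
      · -- k = 2p - 1
        have hk1v : f (k + 1) = encB p (((0 / 2 : ℕ) : ZMod p) * e) false := by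
          rw [hf]; simp only [if_neg (by omega : ¬ k + 1 < 2 * p)]
        rw [hkv, hk1v]
        refine Or.inr ⟨((0 / 2 : ℕ) : ZMod p) * e, Or.inr ⟨rfl, ?_⟩⟩
        congr 1
        have hkd : k / 2 = p - 1 := by omega
        rw [hkd, cast_pred_eq_neg_one (by omega), show (0 / 2 : ℕ) = 0 by norm_num, he]
        push_cast
        ring

end GBGB
section Assemble

lemma caseB {p : ℕ} (hp : p.Prime) (hodd : Odd p) :
    ∃ 𝓖 : Finset (SimpleGraph (Fin (2 * p))),
      (∀ G ∈ 𝓖, ∀ G' ∈ 𝓖, G ≠ G' → ContainsHamCycle (symmDiffG G G')) ∧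
      𝓖.card = 2 ^ (2 * p - 2) := by
  haveI : NeZero p := ⟨hp.ne_zero⟩
  have hp3 : 3 ≤ p := by
    have h2 := hp.two_le
    have := Nat.odd_iff.mp hodd
    omega
  have castFin_inj : ∀ a a' : Fin p, (((a : ℕ) : ZMod p) = ((a' : ℕ) : ZMod p)) → a = a' := by
    intro a a' h
    exact Fin.ext (cast_eq_of_lt a.isLt a'.isLt h)
  have castFin1_inj : ∀ b b' : Fin (p - 1),
      ((((b : ℕ) + 1 : ℕ) : ZMod p) = (((b' : ℕ) + 1 : ℕ) : ZMod p)) → b = b' := by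
    intro b b' h
    have hb := b.isLt
    have hb' := b'.isLt
    have := cast_eq_of_lt (by omega) (by omega) h
    exact Fin.ext (by omega)
  have hGBparam : ∀ b : Fin (p - 1), ((((b : ℕ) + 1 : ℕ)) : ZMod p) ≠ 0 := by
    intro b
    have hb := b.isLt
    exact natcast_ne_zero (by omega) (by omega)
  apply family_exists (n := 2 * p) (by omega)
    (ι := Fin p ⊕ Fin (p - 1))
    (by rw [Fintype.card_sum, Fintype.card_fin, Fintype.card_fin]; omega)
    (Sum.elim (fun a : Fin p => FB p ((a : ℕ) : ZMod p))
      (fun b : Fin (p - 1) => GB p ((((b : ℕ) + 1 : ℕ)) : ZMod p)))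
  · -- nonempty
    rintro (a | b)
    · exact ⟨_, _, Or.inr (Or.inl ⟨rfl, rfl⟩)⟩
    · exact ⟨_, _, ⟨0, Or.inl ⟨rfl, rfl⟩⟩⟩
  · -- edge-disjoint
    rintro (a | b) (a' | b') u v hi hj
    · exact congrArg Sum.inl (castFin_inj a a' (FB_FB_disj hp hodd hi hj))
    · exact (FB_GB_disj (hGBparam b') hi hj).elim
    · exact (FB_GB_disj (hGBparam b) hj hi).elim
    · exact congrArg Sum.inr (castFin1_inj b b' (GB_GB_disj hi hj))
  · -- pairwise hamiltonian
    rintro (a | b) (a' | b') hij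
    · refine FB_FB_ham hp hodd ?_
      intro h
      exact hij (congrArg Sum.inl (castFin_inj a a' h))
    · exact FB_GB_ham hp hodd (hGBparam b')
    · rw [sup_comm]
      exact FB_GB_ham hp hodd (hGBparam b)
    · refine GB_GB_ham hp hodd ?_
      intro h
      exact hij (congrArg Sum.inr (castFin1_inj b b' h))

end Assemble

theorem stmt_5 (n : ℕ)
    (hn : ∃ p : ℕ, Nat.Prime p ∧ Odd p ∧ (n = p + 1 ∨ n = 2 * p)) :
    IsGreatest {m : ℕ | ∃ 𝓖 : Finset (SimpleGraph (Fin n)),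
        (∀ G ∈ 𝓖, ∀ G' ∈ 𝓖, G ≠ G' → ContainsHamCycle (symmDiffG G G')) ∧ 𝓖.card = m}
      (2 ^ (n - 2)) := by
  obtain ⟨p, hp, hodd, hcase⟩ := hn
  have hp3 : 3 ≤ p := by
    have h2 := hp.two_le
    have := Nat.odd_iff.mp hodd
    omega
  constructor
  · rcases hcase with rfl | rfl
    · obtain ⟨𝓖, h1, h2⟩ := caseA hp hodd
      exact ⟨𝓖, h1, h2⟩
    · obtain ⟨𝓖, h1, h2⟩ := caseB hp hodd
      exact ⟨𝓖, h1, h2⟩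
  · rintro m ⟨𝓖, hprop, rfl⟩
    have hn4 : 4 ≤ n := by rcases hcase with rfl | rfl <;> omega
    exact upper_bound hn4 𝓖 hprop
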